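/- arXiv:1108.6111 — 7 statements merged into one kernel-verified Lean document; each statement's English description precedes it below -/
import Mathlib

section
/- The Laurent polynomial γ₂^m γ₃ + γ₄ - 1 in the Laurent polynomial ring ℤ[γ₁^{±1}, γ₂^{±1}, γ₃^{±1}, γ₄^{±1}] is irreducible for every integer m ≥ 0. -/
/-!
Grade by the exponent of γ₃. The width of a nonzero element (the largest minus the smallest
γ₃-exponent in its support) is additive on products: over a group with unique sums the extreme
parts of two factors multiply without cancellation. The given element has width 1, whereas units
have width 0; and in any factorization one factor has width 0, i.e. is homogeneous, so it divides
every homogeneous component of the product, in particular the top one γ₂^m γ₃, which is a unit.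
-/

abbrev LaurentFour : Type := AddMonoidAlgebra ℤ (Fin 4 →₀ ℤ)

noncomputable def monoFour (x : Fin 4 →₀ ℤ) : LaurentFour := AddMonoidAlgebra.single x 1

namespace AddMonoidAlgebra

variable {R G : Type*}

section MaxDegree

variable [Semiring R] [AddMonoid G] (φ : G →+ ℤ)

noncomputable def maxDegree (p : R[G]) : ℤ :=
  if h : p.coeff.support.Nonempty then p.coeff.support.sup' h φ else 0

variable {φ} {p q : R[G]}

theorem le_maxDegree {g : G} (hg : g ∈ p.coeff.support) : φ g ≤ maxDegree φ p := by
  rw [maxDegree, dif_pos ⟨g, hg⟩]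
  exact Finset.le_sup' φ hg

theorem maxDegree_le (hp : p ≠ 0) {n : ℤ} (h : ∀ g ∈ p.coeff.support, φ g ≤ n) :
    maxDegree φ p ≤ n := by
  have hne : p.coeff.support.Nonempty := by simpa using hp
  rw [maxDegree, dif_pos hne]
  exact Finset.sup'_le hne φ h

theorem exists_mem_support_eq_maxDegree (hp : p ≠ 0) :
    ∃ g ∈ p.coeff.support, φ g = maxDegree φ p := by
  have hne : p.coeff.support.Nonempty := by simpa using hp
  obtain ⟨g, hg, hmax⟩ := Finset.exists_mem_eq_sup' hne φ
  exact ⟨g, hg, by rw [maxDegree, dif_pos hne, hmax]⟩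

theorem maxDegree_mul [NoZeroDivisors R] [UniqueSums G] (hp : p ≠ 0) (hq : q ≠ 0) :
    maxDegree φ (p * q) = maxDegree φ p + maxDegree φ q := by
  classical
  refine le_antisymm (maxDegree_le (mul_ne_zero hp hq) fun c hc => ?_) ?_
  · obtain ⟨a, ha, b, hb, rfl⟩ := Finset.mem_add.1 (support_coeff_mul_subset p q hc)
    rw [map_add]
    exact add_le_add (le_maxDegree ha) (le_maxDegree hb)
  · let top : R[G] → Finset G := fun r => r.coeff.support.filter (φ · = maxDegree φ r)
    have top_nonempty {r : R[G]} (hr : r ≠ 0) : (top r).Nonempty := by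
      obtain ⟨g, hg, h⟩ := exists_mem_support_eq_maxDegree (φ := φ) hr
      exact ⟨g, Finset.mem_filter.2 ⟨hg, h⟩⟩
    obtain ⟨a₀, ha₀, b₀, hb₀, hu⟩ :=
      UniqueSums.uniqueAdd_of_nonempty (top_nonempty hp) (top_nonempty hq)
    obtain ⟨ha₀p, ha₀φ⟩ := Finset.mem_filter.1 ha₀
    obtain ⟨hb₀q, hb₀φ⟩ := Finset.mem_filter.1 hb₀
    -- a sum of two supports hits the top degree only through two top-degree monomials
    have hunique : UniqueAdd p.coeff.support q.coeff.support a₀ b₀ := by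
      intro a b ha hb hab
      have hφ : φ a + φ b = φ a₀ + φ b₀ := by rw [← map_add, hab, map_add]
      have := le_maxDegree (φ := φ) ha
      have := le_maxDegree (φ := φ) hb
      exact hu (Finset.mem_filter.2 ⟨ha, by omega⟩) (Finset.mem_filter.2 ⟨hb, by omega⟩) hab
    have hmem : a₀ + b₀ ∈ (p * q).coeff.support := by
      rw [Finsupp.mem_support_iff, coeff_mul_add_of_uniqueAdd hunique]
      exact mul_ne_zero (Finsupp.mem_support_iff.1 ha₀p) (Finsupp.mem_support_iff.1 hb₀q)
    simpa only [map_add, ha₀φ, hb₀φ] using le_maxDegree (φ := φ) hmem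

end MaxDegree

section DegreeWidth

variable [CommSemiring R] [AddMonoid G] (φ : G →+ ℤ)

noncomputable def degreeWidth (p : R[G]) : ℤ := maxDegree φ p + maxDegree (-φ) p

variable {φ} {p q : R[G]}

theorem degreeWidth_nonneg (p : R[G]) : 0 ≤ degreeWidth φ p := by
  by_cases hp : p = 0
  · simp [degreeWidth, maxDegree, hp]
  obtain ⟨g, hg, -⟩ := exists_mem_support_eq_maxDegree (φ := φ) hp
  have h₁ := le_maxDegree (φ := φ) hg
  have h₂ := le_maxDegree (φ := -φ) hg
  simp only [AddMonoidHom.neg_apply] at h₂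
  unfold degreeWidth
  omega

theorem degreeWidth_mul [NoZeroDivisors R] [UniqueSums G] (hp : p ≠ 0) (hq : q ≠ 0) :
    degreeWidth φ (p * q) = degreeWidth φ p + degreeWidth φ q := by
  simp only [degreeWidth, maxDegree_mul hp hq]
  ring

theorem degreeWidth_eq_zero_iff :
    degreeWidth φ p = 0 ↔ SetLike.IsHomogeneousElem (gradeBy R φ) p := by
  by_cases hp : p = 0
  · simp [degreeWidth, maxDegree, hp, SetLike.IsHomogeneousElem]
  constructor
  · intro h
    refine ⟨maxDegree φ p, fun g hg => ?_⟩
    have h₁ := le_maxDegree (φ := φ) hg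
    have h₂ := le_maxDegree (φ := -φ) hg
    simp only [AddMonoidHom.neg_apply] at h₂
    unfold degreeWidth at h
    show φ g = _
    omega
  · rintro ⟨k, hk⟩
    have h₁ : maxDegree φ p ≤ k := maxDegree_le hp fun g hg => (hk g hg).le
    have h₂ : maxDegree (-φ) p ≤ -k := maxDegree_le hp fun g hg => by simp [hk g hg]
    have := degreeWidth_nonneg (φ := φ) p
    unfold degreeWidth at this ⊢
    omega

theorem degreeWidth_add_of_mem_gradeBy {x y : R[G]} {k : ℤ} (hx : x ∈ gradeBy R φ (k + 1))
    (hy : y ∈ gradeBy R φ k) (hx0 : x ≠ 0) (hy0 : y ≠ 0) : degreeWidth φ (x + y) = 1 := by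
  classical
  obtain ⟨g₁, hg₁⟩ : x.coeff.support.Nonempty := by simpa using hx0
  obtain ⟨g₀, hg₀⟩ : y.coeff.support.Nonempty := by simpa using hy0
  have hφg₁ : φ g₁ = k + 1 := hx g₁ hg₁
  have hφg₀ : φ g₀ = k := hy g₀ hg₀
  have hyg₁ : y.coeff g₁ = 0 := Finsupp.notMem_support_iff.1 fun h => by have := hy g₁ h; omega
  have hxg₀ : x.coeff g₀ = 0 := Finsupp.notMem_support_iff.1 fun h => by have := hx g₀ h; omega
  have hg₁' : g₁ ∈ (x + y).coeff.support := by simpa [hyg₁] using hg₁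
  have hg₀' : g₀ ∈ (x + y).coeff.support := by simpa [hxg₀] using hg₀
  have hxy : x + y ≠ 0 := by rintro hxy; simp [hxy] at hg₁'
  have degree_cases (g) (hg : g ∈ (x + y).coeff.support) : φ g = k + 1 ∨ φ g = k :=
    (Finset.mem_union.1 (Finsupp.support_add (by simpa using hg))).imp (hx g) (hy g)
  have h₁ := le_maxDegree (φ := φ) hg₁'
  have h₂ := le_maxDegree (φ := -φ) hg₀'
  have h₃ : maxDegree φ (x + y) ≤ k + 1 :=
    maxDegree_le hxy fun g hg => by rcases degree_cases g hg with h | h <;> omega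
  have h₄ : maxDegree (-φ) (x + y) ≤ -k :=
    maxDegree_le hxy fun g hg => by rcases degree_cases g hg with h | h <;> simp <;> omega
  simp only [AddMonoidHom.neg_apply] at h₂
  unfold degreeWidth
  omega

end DegreeWidth

theorem _root_.SetLike.IsHomogeneousElem.dvd_coe_decompose {ι A σ : Type*} [AddGroup ι]
    [DecidableEq ι] [Semiring A] [SetLike σ A] [AddSubmonoidClass σ A] {𝒜 : ι → σ}
    [GradedRing 𝒜] {a b : A} (ha : SetLike.IsHomogeneousElem 𝒜 a) (hab : a ∣ b) (n : ι) :
    a ∣ (DirectSum.decompose 𝒜 b n : A) := by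
  obtain ⟨i, hi⟩ := ha
  obtain ⟨c, rfl⟩ := hab
  refine ⟨DirectSum.decompose 𝒜 c (-i + n), ?_⟩
  rw [← DirectSum.coe_decompose_mul_add_of_left_mem 𝒜 hi, add_neg_cancel_left]

theorem irreducible_of_degreeWidth_eq_one [CommSemiring R] [NoZeroDivisors R] [AddCommMonoid G]
    [UniqueSums G] {φ : G →+ ℤ} {f : R[G]} (hf : degreeWidth φ f = 1) {n : ℤ}
    (hn : IsUnit (DirectSum.decompose (gradeBy R φ) f n : R[G])) : Irreducible f := by
  have hf0 : f ≠ 0 := by rintro rfl; simp [degreeWidth, maxDegree] at hf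
  have : Nontrivial R[G] := nontrivial_of_ne f 0 hf0
  refine ⟨fun hu => ?_, fun p q hpq => ?_⟩
  · obtain ⟨v, hv⟩ := hu.exists_right_inv
    have hsum := degreeWidth_mul (φ := φ) hf0 (right_ne_zero_of_mul_eq_one hv)
    rw [hv, degreeWidth_eq_zero_iff.2 (SetLike.isHomogeneousElem_one _)] at hsum
    have := degreeWidth_nonneg (φ := φ) v
    omega
  · subst hpq
    have hsum := degreeWidth_mul (φ := φ) (left_ne_zero_of_mul hf0) (right_ne_zero_of_mul hf0)
    have := degreeWidth_nonneg (φ := φ) p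
    have := degreeWidth_nonneg (φ := φ) q
    obtain hp | hq : degreeWidth φ p = 0 ∨ degreeWidth φ q = 0 := by omega
    · exact .inl <| isUnit_of_dvd_unit
        ((degreeWidth_eq_zero_iff.1 hp).dvd_coe_decompose (dvd_mul_right p q) n) hn
    · exact .inr <| isUnit_of_dvd_unit
        ((degreeWidth_eq_zero_iff.1 hq).dvd_coe_decompose (dvd_mul_left q p) n) hn

theorem irreducible_add_of_mem_gradeBy [CommSemiring R] [NoZeroDivisors R] [AddCommMonoid G]
    [UniqueSums G] {φ : G →+ ℤ} {x y : R[G]} {k : ℤ} (hx : x ∈ gradeBy R φ (k + 1))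
    (hy : y ∈ gradeBy R φ k) (hxu : IsUnit x) (hy0 : y ≠ 0) : Irreducible (x + y) := by
  have : Nontrivial R[G] := nontrivial_of_ne y 0 hy0
  refine irreducible_of_degreeWidth_eq_one
    (degreeWidth_add_of_mem_gradeBy hx hy hxu.ne_zero hy0) (n := k + 1) ?_
  rwa [DirectSum.decompose_add, DirectSum.add_apply, Submodule.coe_add,
    DirectSum.decompose_of_mem_same _ hx, DirectSum.decompose_of_mem_ne _ hy (by omega), add_zero]

end AddMonoidAlgebra

/-- The Laurent polynomial `γ₂^m γ₃ + γ₄ - 1` (here the variables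
`γ₂, γ₃, γ₄` are indexed by `1, 2, 3`) is irreducible in
`ℤ[γ₁^{±1}, γ₂^{±1}, γ₃^{±1}, γ₄^{±1}]` for every integer `m ≥ 0`. -/
theorem laurent_irreducible (m : ℕ) :
    Irreducible (monoFour (Finsupp.single 1 (m : ℤ) + Finsupp.single 2 1)
      + monoFour (Finsupp.single 3 1) - 1) := by
  set a : Fin 4 →₀ ℤ := Finsupp.single 1 (m : ℤ) + Finsupp.single 2 1
  set b : Fin 4 →₀ ℤ := Finsupp.single 3 1
  -- the exponent of γ₃, which is the variable of index 2
  let φ : (Fin 4 →₀ ℤ) →+ ℤ := Finsupp.applyAddHom 2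
  have hlead : monoFour a ∈ AddMonoidAlgebra.gradeBy ℤ φ (0 + 1) := by
    rw [show (0 : ℤ) + 1 = φ a by simp [φ, a]]
    exact AddMonoidAlgebra.single_mem_gradeBy _ _ _
  have hconst : monoFour b - 1 ∈ AddMonoidAlgebra.gradeBy ℤ φ 0 := by
    refine sub_mem ?_ (SetLike.one_mem_graded _)
    rw [show (0 : ℤ) = φ b by simp [φ, b]]
    exact AddMonoidAlgebra.single_mem_gradeBy _ _ _
  have hlead_unit : IsUnit (monoFour a) :=
    (Group.isUnit (Multiplicative.ofAdd a)).map (AddMonoidAlgebra.of ℤ (Fin 4 →₀ ℤ))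
  have hconst_ne : monoFour b - 1 ≠ 0 := by
    rw [sub_ne_zero, monoFour, AddMonoidAlgebra.one_def, Ne,
      AddMonoidAlgebra.single_left_inj one_ne_zero]
    simp [b]
  rw [add_sub_assoc]
  exact AddMonoidAlgebra.irreducible_add_of_mem_gradeBy hlead hconst hlead_unit hconst_ne
end

section
/- For every m ≥ 0, the Laurent polynomial γ₂^m γ₃ + γ₄ - 1 is not an associate of its image under the involution γᵢ ↦ γᵢ^{-1}, namely γ₂^{-m} γ₃^{-1} + γ₄^{-1} - 1. -/
/-- The Laurent polynomial ring `ℤ[γ₂^{±1}, γ₃^{±1}, γ₄^{±1}]` in three variables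
(indexed by `0 ↦ γ₂`, `1 ↦ γ₃`, `2 ↦ γ₄`), realized as the group algebra of `ℤ³`. -/
abbrev LaurentThree : Type := AddMonoidAlgebra ℤ (Fin 3 →₀ ℤ)

/-- The monomial with exponent vector `x` and coefficient `1`. -/
noncomputable def monoThree (x : Fin 3 →₀ ℤ) : LaurentThree := AddMonoidAlgebra.single x 1

/-- Units of `ZMod 5` used for evaluation: `γ₂ ↦ 1`, `γ₃ ↦ 4`, `γ₄ ↦ 2`. -/
noncomputable def sUnit : Fin 3 → (ZMod 5)ˣ :=
  ![1, ZMod.unitOfCoprime 4 (by decide), ZMod.unitOfCoprime 2 (by decide)]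

/-- Exponent-vector homomorphism into units of `ZMod 5`. -/
noncomputable def expHom : (Fin 3 →₀ ℤ) →+ Additive (ZMod 5)ˣ :=
  Finsupp.liftAddHom (fun i => zmultiplesHom _ (Additive.ofMul (sUnit i)))

/-- The evaluation algebra homomorphism. -/
noncomputable def evalHom : LaurentThree →ₐ[ℤ] ZMod 5 :=
  AddMonoidAlgebra.lift ℤ (ZMod 5) (Fin 3 →₀ ℤ)
    ((Units.coeHom (ZMod 5)).comp (AddMonoidHom.toMultiplicativeLeft expHom))

lemma evalHom_mono (x : Fin 3 →₀ ℤ) :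
    evalHom (monoThree x) = ((Additive.toMul (expHom x) : (ZMod 5)ˣ) : ZMod 5) := by
  simp [evalHom, monoThree, AddMonoidAlgebra.lift_single, AddMonoidHom.toMultiplicativeLeft]
  rfl

lemma expHom_single (i : Fin 3) (n : ℤ) :
    expHom (Finsupp.single i n) = n • Additive.ofMul (sUnit i) :=
  Finsupp.liftAddHom_apply_single _ i n

/-- For every `m ≥ 0`, the Laurent polynomial `γ₂^m γ₃ + γ₄ - 1` is not an
associate of its image `γ₂^{-m} γ₃^{-1} + γ₄^{-1} - 1` under the involution `γᵢ ↦ γᵢ^{-1}`: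
they do not differ by multiplication by a unit `±(a monomial)`. -/
theorem laurent_not_associated_involution (m : ℕ) :
    ¬ Associated
      (monoThree (Finsupp.single 0 (m : ℤ) + Finsupp.single 1 1)
        + monoThree (Finsupp.single 2 1) - 1)
      (monoThree (Finsupp.single 0 (-(m : ℤ)) + Finsupp.single 1 (-1))
        + monoThree (Finsupp.single 2 (-1)) - 1) := by
  intro h
  have h2 := h.map (evalHom : LaurentThree →ₐ[ℤ] ZMod 5)
  have e1 : evalHom (monoThree (Finsupp.single 0 (m : ℤ) + Finsupp.single 1 1)
      + monoThree (Finsupp.single 2 1) - 1) = 0 := by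
    simp only [map_sub, map_add, map_one, evalHom_mono, expHom_single]
    have h1 : ((m : ℤ) • Additive.ofMul (sUnit 0)) = Additive.ofMul (1 : (ZMod 5)ˣ) := by
      have : sUnit 0 = 1 := by simp [sUnit]
      rw [this]
      simp
    rw [h1]
    simp only [toMul_add, toMul_ofMul, one_smul, one_mul]
    decide
  have e2 : evalHom (monoThree (Finsupp.single 0 (-(m : ℤ)) + Finsupp.single 1 (-1))
      + monoThree (Finsupp.single 2 (-1)) - 1) = 1 := by
    simp only [map_sub, map_add, map_one, evalHom_mono, expHom_single]
    have h1 : ((-(m : ℤ)) • Additive.ofMul (sUnit 0)) = Additive.ofMul (1 : (ZMod 5)ˣ) := by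
      have : sUnit 0 = 1 := by simp [sUnit]
      rw [this]
      simp
    rw [h1]
    simp only [toMul_add, toMul_ofMul, toMul_zsmul, one_mul, zpow_neg, zpow_one]
    have i1 : (sUnit 1)⁻¹ = ZMod.unitOfCoprime 4 (by decide) := by
      rw [inv_eq_iff_mul_eq_one]; ext; decide
    have i2 : (sUnit 2)⁻¹ = ZMod.unitOfCoprime 3 (by decide) := by
      rw [inv_eq_iff_mul_eq_one]; ext; decide
    rw [i1, i2]
    decide
  rw [e1, e2] at h2
  have := (associated_zero_iff_eq_zero (1 : ZMod 5)).mp h2.symm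
  exact absurd this (by decide)
end

section
/- Every abelian group is acyclically closed: for any abelian group G, any acyclic system of equations x_i = w_i(x_1,...,x_m) over G (where each w_i ∈ G * F_m maps to the commutator subgroup under the projection G * F_m → F_m → H_1(F_m)) has a unique solution in G. -/
open Monoid

/-- The homomorphism `G ∗ F_m → H₁(F_m)` : kill `G`, project the free group
`F_m` onto its abelianization `ℤ^m` (written multiplicatively). -/
noncomputable def acyclicTest (G : Type*) [Group G] (m : ℕ) :
    (Monoid.Coprod G (FreeGroup (Fin m))) →* Multiplicative (Fin m →₀ ℤ) :=
  Monoid.Coprod.lift 1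
    (FreeGroup.lift fun j => Multiplicative.ofAdd (Finsupp.single j (1 : ℤ)))

/-- A word `w ∈ G ∗ F_m` is acyclic if it dies in `H₁(F_m)`. -/
def IsAcyclicWord {G : Type*} [Group G] {m : ℕ}
    (w : Monoid.Coprod G (FreeGroup (Fin m))) : Prop :=
  acyclicTest G m w = 1

/-- Substituting the values `g : Fin m → G` for the variables in a word of `G ∗ F_m`. -/
noncomputable def substWord {G : Type*} [Group G] {m : ℕ} (g : Fin m → G) :
    (Monoid.Coprod G (FreeGroup (Fin m))) →* G :=
  Monoid.Coprod.lift (MonoidHom.id G) (FreeGroup.lift g)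

/-- A group `G` is *acyclically closed* (AC) if every acyclic system of equations
`x_i = w_i(x_1, …, x_m)` over `G` has a unique solution in `G`. -/
def IsAcyclicallyClosed (G : Type*) [Group G] : Prop :=
  ∀ (m : ℕ) (w : Fin m → Monoid.Coprod G (FreeGroup (Fin m))),
    (∀ i, IsAcyclicWord (w i)) →
    ∃! g : Fin m → G, ∀ i, substWord g (w i) = g i

/-
In an abelian group, substituting `g` into a word `w` gives `w(1)` times the product of the
`g j` raised to the exponent sums of `x_j` in `w`; that product is read off the image of `w` in
`H₁(F_m)`. For acyclic words it is therefore trivial, so `w_i(g) = w_i(1)` for every `g`, and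
`g_i = w_i(1)` is the one and only solution.
-/

noncomputable def zpowProdHom {G ι : Type*} [CommGroup G] (g : ι → G) :
    Multiplicative (ι →₀ ℤ) →* G :=
  AddMonoidHom.toMultiplicativeLeft <|
    Finsupp.liftAddHom fun j => zmultiplesHom (Additive G) (Additive.ofMul (g j))

@[simp]
lemma zpowProdHom_ofAdd_single {G ι : Type*} [CommGroup G] (g : ι → G) (j : ι) (n : ℤ) :
    zpowProdHom g (Multiplicative.ofAdd (Finsupp.single j n)) = g j ^ n := by
  simp [zpowProdHom]

lemma substWord_eq_zpowProdHom_mul {G : Type*} [CommGroup G] {m : ℕ} (g : Fin m → G)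
    (w : Monoid.Coprod G (FreeGroup (Fin m))) :
    substWord g w = zpowProdHom g (acyclicTest G m w) * substWord 1 w := by
  suffices substWord g = (zpowProdHom g).comp (acyclicTest G m) * substWord 1 from
    DFunLike.congr_fun this w
  ext <;> simp [substWord, acyclicTest]

lemma IsAcyclicWord.substWord_eq {G : Type*} [CommGroup G] {m : ℕ} (g : Fin m → G)
    {w : Monoid.Coprod G (FreeGroup (Fin m))} (hw : IsAcyclicWord w) :
    substWord g w = substWord 1 w := by
  rw [substWord_eq_zpowProdHom_mul, show acyclicTest G m w = 1 from hw, map_one, one_mul]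

/-- Every abelian group is acyclically closed: every acyclic system of
equations over an abelian group `G` has a unique solution in `G`. -/
theorem commGroup_isAcyclicallyClosed (G : Type*) [CommGroup G] :
    IsAcyclicallyClosed G := by
  intro m w hw
  refine ⟨fun i => substWord 1 (w i), fun i => (hw i).substWord_eq _, fun g hg => ?_⟩
  funext i
  rw [← hg i, (hw i).substWord_eq]
end

section
/- The class of acyclically closed groups is closed under direct products: if G₁ and G₂ are AC groups, then G₁ × G₂ is an AC group. -/
open Monoid

section Aux

variable {G H : Type*} [Group G] [Group H] {m : ℕ}

/-- Push a group homomorphism through the coproduct with the free group. -/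
noncomputable def coprodMapHom (f : G →* H) (m : ℕ) :
    Monoid.Coprod G (FreeGroup (Fin m)) →* Monoid.Coprod H (FreeGroup (Fin m)) :=
  Monoid.Coprod.lift (Monoid.Coprod.inl.comp f) Monoid.Coprod.inr

lemma acyclicTest_coprodMapHom (f : G →* H) (w : Monoid.Coprod G (FreeGroup (Fin m))) :
    acyclicTest H m (coprodMapHom f m w) = acyclicTest G m w := by
  have : (acyclicTest H m).comp (coprodMapHom f m) = acyclicTest G m := by
    apply Monoid.Coprod.hom_ext
    · ext a
      simp [coprodMapHom, acyclicTest]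
    · ext j
      simp [coprodMapHom, acyclicTest]
  exact DFunLike.congr_fun this w

lemma substWord_coprodMapHom (f : G →* H) (g : Fin m → G)
    (w : Monoid.Coprod G (FreeGroup (Fin m))) :
    substWord (fun i => f (g i)) (coprodMapHom f m w) = f (substWord g w) := by
  have : (substWord (fun i => f (g i))).comp (coprodMapHom f m)
      = f.comp (substWord g) := by
    apply Monoid.Coprod.hom_ext
    · ext a
      simp [coprodMapHom, substWord]
    · ext j
      simp [coprodMapHom, substWord]
  exact DFunLike.congr_fun this w

end Aux

/-- The class of acyclically closed groups is closed under direct products: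
if `G₁` and `G₂` are AC groups, so is `G₁ × G₂`. -/
theorem isAcyclicallyClosed_prod (G₁ G₂ : Type*) [Group G₁] [Group G₂]
    (h₁ : IsAcyclicallyClosed G₁) (h₂ : IsAcyclicallyClosed G₂) :
    IsAcyclicallyClosed (G₁ × G₂) := by
  intro m w hw
  set π₁ := coprodMapHom (MonoidHom.fst G₁ G₂) m
  set π₂ := coprodMapHom (MonoidHom.snd G₁ G₂) m
  have hw1 : ∀ i, IsAcyclicWord (π₁ (w i)) := fun i => by
    unfold IsAcyclicWord
    rw [acyclicTest_coprodMapHom]; exact hw i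
  have hw2 : ∀ i, IsAcyclicWord (π₂ (w i)) := fun i => by
    unfold IsAcyclicWord
    rw [acyclicTest_coprodMapHom]; exact hw i
  obtain ⟨g₁, hg₁, hu₁⟩ := h₁ m (fun i => π₁ (w i)) hw1
  obtain ⟨g₂, hg₂, hu₂⟩ := h₂ m (fun i => π₂ (w i)) hw2
  refine ⟨fun i => (g₁ i, g₂ i), fun i => ?_, fun g hg => ?_⟩
  · have e1 := substWord_coprodMapHom (MonoidHom.fst G₁ G₂) (fun i => (g₁ i, g₂ i)) (w i)
    have e2 := substWord_coprodMapHom (MonoidHom.snd G₁ G₂) (fun i => (g₁ i, g₂ i)) (w i)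
    simp only [MonoidHom.coe_fst, MonoidHom.coe_snd] at e1 e2
    ext
    · rw [← e1]; exact hg₁ i
    · rw [← e2]; exact hg₂ i
  · have k1 : (fun i => (g i).1) = g₁ := by
      apply hu₁
      intro i
      have e1 := substWord_coprodMapHom (MonoidHom.fst G₁ G₂) g (w i)
      simp only [MonoidHom.coe_fst] at e1
      rw [e1, hg i]
    have k2 : (fun i => (g i).2) = g₂ := by
      apply hu₂
      intro i
      have e2 := substWord_coprodMapHom (MonoidHom.snd G₁ G₂) g (w i)
      simp only [MonoidHom.coe_snd] at e2
      rw [e2, hg i]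
    funext i
    ext
    · exact congrFun k1 i
    · exact congrFun k2 i
end

section
/- Every nilpotent group is acyclically closed. -/
/-!
Induct on the nilpotency class, passing from `G ⧸ Z(G)` to `G`. If `ḡ` solves the reduced
system in `G ⧸ Z(G)` and `g₀` lifts it, then `g₀` solves the system up to central errors.
Multiplying the variables by central elements `z` changes the value of a word `w` by the image of
`w` in the abelian group generated by the `z`, and this image factors through `H₁(F_m)`, where an
acyclic word vanishes. So `i ↦ w i (g₀)` is a solution, and any two solutions, both lifting `ḡ`
by uniqueness downstairs, differ centrally and hence agree.
-/

open Monoid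

open Monoid.Coprod Subgroup

section

variable {G H : Type*} [Group G] [Group H] {m : ℕ}

lemma acyclicTest_comp_map (f : G →* H) :
    (acyclicTest H m).comp (map f (MonoidHom.id _)) = acyclicTest G m :=
  hom_ext (by ext; simp [acyclicTest]) rfl

lemma IsAcyclicWord.map (f : G →* H) {w : G ∗ FreeGroup (Fin m)}
    (hw : IsAcyclicWord w) : IsAcyclicWord (map f (MonoidHom.id _) w) :=
  (DFunLike.congr_fun (acyclicTest_comp_map f) w).trans hw

lemma map_substWord (f : G →* H) (g : Fin m → G) (u : G ∗ FreeGroup (Fin m)) :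
    f (substWord g u) = substWord (f ∘ g) (map f (MonoidHom.id _) u) := by
  have : f.comp (substWord g) = (substWord (f ∘ g)).comp (map f (MonoidHom.id _)) :=
    hom_ext (by ext; simp [substWord]) (FreeGroup.ext_hom _ _ fun j => by simp [substWord])
  exact DFunLike.congr_fun this u

lemma IsAcyclicWord.apply_eq_one_of_comp_inl_eq_one {A : Type*} [CommGroup A]
    {φ : G ∗ FreeGroup (Fin m) →* A} (hφ : φ.comp inl = 1)
    {w : G ∗ FreeGroup (Fin m)} (hw : IsAcyclicWord w) : φ w = 1 := by
  let χ : Multiplicative (Fin m →₀ ℤ) →* A := AddMonoidHom.toMultiplicativeLeft <|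
    Finsupp.liftAddHom fun j => zmultiplesHom (Additive A) (Additive.ofMul (φ (inr (.of j))))
  have hfactor : φ = χ.comp (acyclicTest G m) := by
    refine hom_ext ?_ (FreeGroup.ext_hom _ _ fun j => ?_)
    · rw [hφ]; ext; simp [acyclicTest]
    · simp [χ, acyclicTest]
  rw [hfactor, MonoidHom.comp_apply, show acyclicTest G m w = 1 from hw, map_one]

lemma substWord_mul_center (g : Fin m → G) (z : Fin m → center G) :
    substWord (fun j => g j * z j) = ((MonoidHom.id G).noncommCoprod (center G).subtype
      fun a c => (commute_iff_eq _ _).mpr (mem_center_iff.mp c.2 a)).comp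
        ((substWord g).prod (lift 1 (FreeGroup.lift z))) := by
  refine hom_ext ?_ (FreeGroup.ext_hom _ _ fun j => ?_)
  · ext; simp [substWord]
  · simp [substWord]

open scoped IsMulCommutative in
lemma IsAcyclicWord.substWord_eq_of_inv_mul_mem_center
    {w : G ∗ FreeGroup (Fin m)} (hw : IsAcyclicWord w) {g₁ g₂ : Fin m → G}
    (h : ∀ j, (g₁ j)⁻¹ * g₂ j ∈ center G) : substWord g₁ w = substWord g₂ w := by
  have hg₂ : g₂ = fun j => g₁ j * (⟨_, h j⟩ : center G) := by simp
  have hkill := hw.apply_eq_one_of_comp_inl_eq_one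
    (φ := lift 1 (FreeGroup.lift fun j => (⟨_, h j⟩ : center G))) (lift_comp_inl _ _)
  rw [hg₂, substWord_mul_center]
  simp [hkill]

theorem IsAcyclicallyClosed.of_quotient_of_le_center {N : Subgroup G} [N.Normal]
    (hN : N ≤ center G) (hQ : IsAcyclicallyClosed (G ⧸ N)) : IsAcyclicallyClosed G := by
  intro m w hw
  let π := QuotientGroup.mk' N
  obtain ⟨q, hq, hq_unique⟩ :=
    hQ m (fun i => map π (MonoidHom.id _) (w i)) fun i => (hw i).map π
  have hproj : ∀ g : Fin m → G, (∀ i, substWord g (w i) = g i) → π ∘ g = q := fun g hg =>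
    hq_unique _ fun i => by rw [← map_substWord, hg]; rfl
  have hcentral : ∀ g₁ g₂ : Fin m → G, π ∘ g₁ = π ∘ g₂ → ∀ j, (g₁ j)⁻¹ * g₂ j ∈ center G :=
    fun g₁ g₂ h j => hN (QuotientGroup.eq.mp (congrFun h j))
  let g₀ : Fin m → G := fun j => (q j).out
  have hg₀ : π ∘ g₀ = q := funext fun j => (q j).out_eq
  -- One step of the fixed-point iteration from a lift of the solution downstairs lands on a solution.
  let g : Fin m → G := fun i => substWord g₀ (w i)
  have hπg : π ∘ g = π ∘ g₀ := funext fun i => by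
    simp only [Function.comp_apply, g, map_substWord, hg₀]
    exact (hq i).trans (congrFun hg₀ i).symm
  have hg : ∀ i, substWord g (w i) = g i := fun i =>
    (hw i).substWord_eq_of_inv_mul_mem_center (hcentral _ _ hπg)
  refine ⟨g, hg, fun g' hg' => funext fun i => ?_⟩
  rw [← hg' i, ← hg i]
  exact (hw i).substWord_eq_of_inv_mul_mem_center
    (hcentral _ _ ((hproj g' hg').trans (hproj g hg).symm))

lemma isAcyclicallyClosed_of_subsingleton [Subsingleton G] : IsAcyclicallyClosed G :=
  fun _ _ _ => ⟨1, fun _ => Subsingleton.elim _ _, fun _ _ => Subsingleton.elim _ _⟩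

end

/-- Every nilpotent group is acyclically closed. -/
theorem isAcyclicallyClosed_of_nilpotent (G : Type*) [Group G] [Group.IsNilpotent G] :
    IsAcyclicallyClosed G :=
  Group.nilpotent_center_quotient_ind (P := fun G _ _ => IsAcyclicallyClosed G) G
    (fun _ _ _ => isAcyclicallyClosed_of_subsingleton)
    fun _ _ _ => IsAcyclicallyClosed.of_quotient_of_le_center le_rfl
end

section
/- For the 2-connected endomorphism f_m of the free group F_n (n ≥ 2) defined by f_m(γ₁) = (γ₁γ₂^{-1}γ₁^{-1}γ₂^{-1})^m γ₁ γ₂^{2m} and f_m(γᵢ) = γᵢ for i ≥ 2, the Fox derivative ∂f_m(γ₁)/∂γ₁, after applying the abelianization F_n → H₁ to all coefficients and then the involution γ ↦ γ^{-1}, equals 1 - γ₂ + γ₂² - ... + γ₂^{2m} in ℤ[H₁]. -/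
/-- The Laurent polynomial ring `ℤ[H₁] = ℤ[γ₁^{±1}, …, γ_n^{±1}]`. -/
abbrev LaurentRing (n : ℕ) : Type := AddMonoidAlgebra ℤ (Fin n →₀ ℤ)

/-- The monomial `γ^x` attached to `x ∈ H₁ = ℤⁿ`. -/
noncomputable def monoR (n : ℕ) (x : Fin n →₀ ℤ) : LaurentRing n :=
  AddMonoidAlgebra.single x 1

/-! Abelianized Fox calculus is a crossed homomorphism `d(uv) = d u + ε(u) d v`, so
`d(uᵏ) = (1 + ε u + ⋯ + ε(u)^{k-1}) d u`. With `a = γ₁`, `b = γ₂`, `y = ε(b)⁻¹` and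
`c = a b⁻¹ a⁻¹ b⁻¹`, commutativity of `ℤ[H₁]` gives `ε c = y²` and `d c = 1 - y`, hence
`d(cᵐ a b^{2m}) = (1 + y² + ⋯ + y^{2(m-1)})(1 - y) + y^{2m} = ∑_{k ≤ 2m} (-y)ᵏ`;
the involution sends `y` to `γ₂`. -/

open Finset

/-- The product rule of Fox calculus, with coefficients pushed to `R` along `ε`. -/
def IsCrossedHom {G R : Type*} [Group G] [Ring R] (ε : G →* Rˣ) (d : G → R) : Prop :=
  ∀ u v, d (u * v) = d u + (ε u : R) * d v

namespace IsCrossedHom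

variable {G R : Type*} [Group G] [Ring R] {ε : G →* Rˣ} {d : G → R}

theorem map_one (hd : IsCrossedHom ε d) : d 1 = 0 := by
  simpa using hd 1 1

theorem map_inv (hd : IsCrossedHom ε d) (u : G) : d u⁻¹ = -((ε u⁻¹ : R) * d u) := by
  have h := hd u⁻¹ u
  rw [inv_mul_cancel, hd.map_one] at h
  exact eq_neg_of_add_eq_zero_left h.symm

theorem map_pow (hd : IsCrossedHom ε d) (u : G) (k : ℕ) :
    d (u ^ k) = (∑ j ∈ range k, (ε u : R) ^ j) * d u := by
  induction k with
  | zero => simp [hd.map_one]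
  | succ k ih =>
    rw [pow_succ, hd, ih, _root_.map_pow, Units.val_pow_eq_pow_val, sum_range_succ, add_mul]

end IsCrossedHom

theorem sum_range_two_mul_pow {R : Type*} [CommRing R] (x : R) (m : ℕ) :
    ∑ k ∈ range (2 * m), x ^ k = (∑ j ∈ range m, (x ^ 2) ^ j) * (1 + x) := by
  induction m with
  | zero => simp
  | succ m ih =>
    rw [show 2 * (m + 1) = 2 * m + 1 + 1 by ring, sum_range_succ, sum_range_succ, ih,
      sum_range_succ]
    ring

theorem IsCrossedHom.map_fm_word {G R : Type*} [Group G] [CommRing R] {ε : G →* Rˣ}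
    {d : G → R} (hd : IsCrossedHom ε d) {a b : G} (ha : d a = 1) (hb : d b = 0) (m : ℕ) :
    d ((a * b⁻¹ * a⁻¹ * b⁻¹) ^ m * a * b ^ (2 * m)) =
      ∑ k ∈ range (2 * m + 1), (-(↑(ε b)⁻¹ : R)) ^ k := by
  set y : R := ↑(ε b)⁻¹
  have hεa : (ε a : R) * (ε a⁻¹ : R) = 1 := by simp [← Units.val_mul]
  have hεc : (ε (a * b⁻¹ * a⁻¹ * b⁻¹) : R) = y ^ 2 := by
    simp only [_root_.map_mul, Units.val_mul, _root_.map_inv ε b, y]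
    linear_combination y ^ 2 * hεa
  have hdb_inv : d b⁻¹ = 0 := by rw [hd.map_inv, hb, mul_zero, neg_zero]
  have hdc : d (a * b⁻¹ * a⁻¹ * b⁻¹) = 1 - y := by
    simp only [hd (a * b⁻¹ * a⁻¹), hd (a * b⁻¹), hd a, hd.map_inv a, ha, hdb_inv,
      _root_.map_mul, Units.val_mul, _root_.map_inv ε b, y]
    linear_combination (-y) * hεa
  have hdcm : d ((a * b⁻¹ * a⁻¹ * b⁻¹) ^ m) = (∑ j ∈ range m, (y ^ 2) ^ j) * (1 - y) := by
    rw [hd.map_pow, hεc, hdc]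
  have hdbm : d (b ^ (2 * m)) = 0 := by rw [hd.map_pow, hb, mul_zero]
  rw [hd, hd, hdcm, ha, hdbm, _root_.map_pow, Units.val_pow_eq_pow_val, hεc, sum_range_succ,
    sum_range_two_mul_pow, neg_sq, (even_two_mul m).neg_pow, pow_mul]
  ring

theorem neg_monoR_single_one_pow (n : ℕ) (i : Fin n) (k : ℕ) :
    (-monoR n (Finsupp.single i 1)) ^ k =
      AddMonoidAlgebra.single (Finsupp.single i (k : ℤ)) ((-1 : ℤ) ^ k) := by
  rw [monoR, ← AddMonoidAlgebra.single_neg, AddMonoidAlgebra.single_pow, Finsupp.smul_single,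
    nsmul_one]

/-- For `f_m(γ₁) = (γ₁γ₂⁻¹γ₁⁻¹γ₂⁻¹)^m γ₁ γ₂^{2m}` in the free group `F_n`
(`n ≥ 2`), the abelianized Fox derivative `∂f_m(γ₁)/∂γ₁ ∈ ℤ[H₁]`, after applying the
involution `γ ↦ γ⁻¹`, equals `1 - γ₂ + γ₂² - ⋯ + γ₂^{2m}`.
Here `d` is the Fox derivative with respect to `γ₁` pushed to `ℤ[H₁]`: it satisfies
`d(γⱼ) = δ_{1j}` and the product rule `d(uv) = d(u) + ε(u)·d(v)` with `ε` the monomial map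
induced by abelianization, and `σ` is the involution of `ℤ[H₁]`. -/
theorem fox_derivative_fm (n m : ℕ) (hn : 2 ≤ n)
    (ε : FreeGroup (Fin n) →* (LaurentRing n)ˣ)
    (hε : ∀ j : Fin n, (ε (FreeGroup.of j) : LaurentRing n) = monoR n (Finsupp.single j 1))
    (σ : LaurentRing n ≃+* LaurentRing n)
    (hσ : ∀ x : Fin n →₀ ℤ, σ (monoR n x) = monoR n (-x))
    (d : FreeGroup (Fin n) → LaurentRing n)
    (hbase : ∀ j : Fin n, d (FreeGroup.of j) = if j = (⟨0, by omega⟩ : Fin n) then 1 else 0)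
    (hprod : ∀ u v : FreeGroup (Fin n), d (u * v) = d u + (ε u : LaurentRing n) * d v) :
    σ (d ((FreeGroup.of (⟨0, by omega⟩ : Fin n) * (FreeGroup.of (⟨1, by omega⟩ : Fin n))⁻¹ *
          (FreeGroup.of (⟨0, by omega⟩ : Fin n))⁻¹ * (FreeGroup.of (⟨1, by omega⟩ : Fin n))⁻¹) ^ m *
          FreeGroup.of (⟨0, by omega⟩ : Fin n) *
          (FreeGroup.of (⟨1, by omega⟩ : Fin n)) ^ (2 * m)))
      = ∑ k ∈ Finset.range (2 * m + 1),
          AddMonoidAlgebra.single (Finsupp.single (⟨1, by omega⟩ : Fin n) (k : ℤ))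
            ((-1 : ℤ) ^ k) := by
  set i₁ : Fin n := ⟨1, by omega⟩
  have hda : d (FreeGroup.of ⟨0, by omega⟩) = 1 := by simp [hbase]
  have hdb : d (FreeGroup.of i₁) = 0 := by simp [hbase, i₁, Fin.ext_iff]
  have hσy : σ ((ε (FreeGroup.of i₁))⁻¹ : (LaurentRing n)ˣ) = monoR n (Finsupp.single i₁ 1) := by
    have hy : (((ε (FreeGroup.of i₁))⁻¹ : (LaurentRing n)ˣ) : LaurentRing n) =
        monoR n (-Finsupp.single i₁ 1) := by
      refine Units.inv_eq_of_mul_eq_one_right ?_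
      rw [hε, monoR, monoR, AddMonoidAlgebra.single_mul_single, add_neg_cancel, mul_one,
        AddMonoidAlgebra.one_def]
    rw [hy, hσ, neg_neg]
  rw [IsCrossedHom.map_fm_word hprod hda hdb, map_sum]
  refine sum_congr rfl fun k _ => ?_
  rw [_root_.map_pow, map_neg, hσy, neg_monoR_single_one_pow]
end

section
/- The determinant of the Magnus matrix of any automorphism of the free group F_n lies in ±H₁: for φ ∈ Aut(F_n), det((∂φ(γ_j)/∂γ_i)_{ij} mod abelianization) = ±γ for some γ ∈ H₁ = ℤⁿ (a signed monomial in the Laurent polynomial ring ℤ[H₁]). -/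
open Finset

namespace AddMonoidAlgebra

variable {R A : Type*}

theorem card_support_mul_card_support_le_one_of_mul_eq_single [Semiring R] [NoZeroDivisors R]
    [Add A] [TwoUniqueSums A] {p q : AddMonoidAlgebra R A} {c : A} {r : R}
    (h : p * q = single c r) : #p.coeff.support * #q.coeff.support ≤ 1 := by
  by_contra! hcard
  obtain ⟨x, hx, y, hy, hxy, hux, huy⟩ := TwoUniqueSums.uniqueAdd_of_one_lt_card hcard
  -- At a unique sum the coefficient of `p * q` is a product of nonzero coefficients.
  have sum_eq_of_uniqueAdd (z : A × A) (hz : z ∈ p.coeff.support ×ˢ q.coeff.support)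
      (hu : UniqueAdd p.coeff.support q.coeff.support z.1 z.2) : z.1 + z.2 = c := by
    rw [Finset.mem_product, Finsupp.mem_support_iff, Finsupp.mem_support_iff] at hz
    by_contra hne
    have hcoeff := coeff_mul_add_of_uniqueAdd hu
    rw [h, coeff_single, Finsupp.single_eq_of_ne hne] at hcoeff
    exact mul_ne_zero hz.1 hz.2 hcoeff.symm
  have hx' := Finset.mem_product.mp hx
  exact hxy (Prod.ext_iff.mpr (huy hx'.1 hx'.2
    ((sum_eq_of_uniqueAdd x hx hux).trans (sum_eq_of_uniqueAdd y hy huy).symm)))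

theorem exists_eq_single_of_card_support_eq_one [Semiring R] {p : AddMonoidAlgebra R A}
    (hp : #p.coeff.support = 1) : ∃ a r, r ≠ 0 ∧ p = single a r := by
  obtain ⟨a, ha, hpa⟩ := Finsupp.card_support_eq_one.mp hp
  exact ⟨a, p.coeff a, ha, AddMonoidAlgebra.ext (by rw [coeff_single]; exact hpa)⟩

theorem exists_eq_single_of_isUnit [CommSemiring R] [NoZeroDivisors R] [AddMonoid A]
    [TwoUniqueSums A] {p : AddMonoidAlgebra R A} (hunit : IsUnit p) :
    ∃ a r, IsUnit r ∧ p = single a r := by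
  nontriviality R
  obtain ⟨q, h⟩ := hunit.exists_right_inv
  have hcard := card_support_mul_card_support_le_one_of_mul_eq_single (h.trans one_def)
  have card_pos {f : AddMonoidAlgebra R A} (hf : f ≠ 0) : 0 < #f.coeff.support :=
    Finset.card_pos.mpr (Finsupp.support_nonempty_iff.mpr (mt coeff_eq_zero.mp hf))
  have hp := card_pos (left_ne_zero_of_mul_eq_one h)
  have hq := card_pos (right_ne_zero_of_mul_eq_one h)
  obtain ⟨a, s, -, rfl⟩ := exists_eq_single_of_card_support_eq_one (p := p) (by nlinarith)
  obtain ⟨b, t, -, rfl⟩ := exists_eq_single_of_card_support_eq_one (p := q) (by nlinarith)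
  have hst : s * t = 1 := by
    have hcoeff := congrArg coeff h
    rw [single_mul_single, one_def, coeff_single, coeff_single,
      Finsupp.single_eq_single_iff] at hcoeff
    rcases hcoeff with ⟨-, hst⟩ | ⟨-, h10⟩
    exacts [hst, absurd h10 one_ne_zero]
  exact ⟨a, s, IsUnit.of_mul_eq_one t hst, rfl⟩

end AddMonoidAlgebra

/-- A crossed homomorphism `G → R` for the left action of `G` on `R` through `χ`; the Fox
derivatives are the basic examples. -/
def IsTwistedDerivation {G R : Type*} [Monoid G] [Semiring R] (χ : G →* R) (D : G → R) : Prop :=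
  ∀ u v, D (u * v) = D u + χ u * D v

namespace IsTwistedDerivation

section Group

variable {G H R S : Type*} [Group G] [Group H] [Ring R] [Ring S] {χ : G →* R} {D D' : G → R}

theorem map_one (hD : IsTwistedDerivation χ D) : D 1 = 0 := by
  simpa using hD 1 1

theorem map_inv (hD : IsTwistedDerivation χ D) (g : G) : D g⁻¹ = -(χ g⁻¹ * D g) := by
  have h := hD g⁻¹ g
  rw [inv_mul_cancel, hD.map_one] at h
  exact eq_neg_of_add_eq_zero_left h.symm

theorem sub (hD : IsTwistedDerivation χ D) (hD' : IsTwistedDerivation χ D') :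
    IsTwistedDerivation χ (D - D') := fun u v => by
  simp only [Pi.sub_apply, hD u v, hD' u v]
  noncomm_ring

theorem comp (hD : IsTwistedDerivation χ D) (φ : H →* G) :
    IsTwistedDerivation (χ.comp φ) (D ∘ φ) := fun u v => by
  simp only [Function.comp_apply, map_mul, hD (φ u) (φ v), MonoidHom.comp_apply]

theorem sum_map_mul {ι : Type*} (s : Finset ι) {D : ι → G → R}
    (hD : ∀ k, IsTwistedDerivation χ (D k)) (σ : R →+* S) (c : ι → S) :
    IsTwistedDerivation (σ.toMonoidHom.comp χ) fun w => ∑ k ∈ s, σ (D k w) * c k := fun u v => by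
  simp only [hD _ u v, map_add, map_mul, add_mul, mul_assoc, Finset.sum_add_distrib,
    Finset.mul_sum, MonoidHom.comp_apply]
  rfl

end Group

theorem freeGroup_ext {α R : Type*} [Ring R] {χ : FreeGroup α →* R} {D D' : FreeGroup α → R}
    (hD : IsTwistedDerivation χ D) (hD' : IsTwistedDerivation χ D')
    (h : ∀ a, D (FreeGroup.of a) = D' (FreeGroup.of a)) : D = D' := by
  have hE := hD.sub hD'
  suffices ∀ w, (D - D') w = 0 from funext fun w => sub_eq_zero.mp (this w)
  intro w
  induction w using FreeGroup.induction_on with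
  | C1 => exact hE.map_one
  | of a => exact sub_eq_zero.mpr (h a)
  | inv_of a ih => rw [hE.map_inv, ih, mul_zero, neg_zero]
  | mul u v hu hv => rw [hE, hu, hv, mul_zero, add_zero]

end IsTwistedDerivation

section FoxJacobian

variable {α R : Type*} [DecidableEq α] [CommRing R] {χ : FreeGroup α →* R}
  {d : α → FreeGroup α → R}

def foxJacobian (d : α → FreeGroup α → R) (φ : FreeGroup α →* FreeGroup α) : Matrix α α R :=
  Matrix.of fun i j => d i (φ (FreeGroup.of j))

theorem foxJacobian_id (hbase : ∀ i j, d i (FreeGroup.of j) = if i = j then 1 else 0) :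
    foxJacobian d (MonoidHom.id _) = 1 := by
  ext i j
  simp [foxJacobian, hbase, Matrix.one_apply]

variable [Fintype α]

theorem fox_chain_rule (hbase : ∀ i j, d i (FreeGroup.of j) = if i = j then 1 else 0)
    (hd : ∀ i, IsTwistedDerivation χ (d i)) {φ : FreeGroup α →* FreeGroup α}
    {σ : R →+* R} (hσ : σ.toMonoidHom.comp χ = χ.comp φ) (i : α) (w : FreeGroup α) :
    d i (φ w) = ∑ k, σ (d k w) * d i (φ (FreeGroup.of k)) := by
  have hsum := IsTwistedDerivation.sum_map_mul Finset.univ hd σ fun k => d i (φ (FreeGroup.of k))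
  rw [hσ] at hsum
  refine congrFun (IsTwistedDerivation.freeGroup_ext ((hd i).comp φ) hsum fun j => ?_) w
  simp [hbase]

theorem foxJacobian_comp (hbase : ∀ i j, d i (FreeGroup.of j) = if i = j then 1 else 0)
    (hd : ∀ i, IsTwistedDerivation χ (d i)) {φ ψ : FreeGroup α →* FreeGroup α} {σ : R →+* R}
    (hσ : σ.toMonoidHom.comp χ = χ.comp φ) :
    foxJacobian d (φ.comp ψ) = foxJacobian d φ * (foxJacobian d ψ).map σ := by
  ext i j
  rw [foxJacobian, Matrix.of_apply, MonoidHom.comp_apply, fox_chain_rule hbase hd hσ,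
    Matrix.mul_apply]
  exact Finset.sum_congr rfl fun k _ => mul_comm _ _

end FoxJacobian

namespace LaurentRing

theorem exists_ringHom_monoR_single {n : ℕ} {R : Type*} [CommRing R] (u : Fin n → Rˣ) :
    ∃ σ : LaurentRing n →+* R, ∀ j, σ (monoR n (Finsupp.single j 1)) = u j := by
  let g : Multiplicative (Fin n →₀ ℤ) →* Rˣ := AddMonoidHom.toMultiplicativeLeft
    (Finsupp.liftAddHom fun j => zmultiplesHom (Additive Rˣ) (Additive.ofMul (u j)))
  refine ⟨(AddMonoidAlgebra.lift ℤ R _ ((Units.coeHom R).comp g)).toRingHom, fun j => ?_⟩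
  simp [monoR, g]

theorem eq_monoR_or_eq_neg_monoR_of_isUnit {n : ℕ} {p : LaurentRing n} (hp : IsUnit p) :
    ∃ x, p = monoR n x ∨ p = -monoR n x := by
  obtain ⟨x, r, hr, rfl⟩ := AddMonoidAlgebra.exists_eq_single_of_isUnit hp
  refine ⟨x, ?_⟩
  rcases Int.isUnit_iff.mp hr with rfl | rfl
  exacts [Or.inl rfl, Or.inr (AddMonoidAlgebra.single_neg x 1)]

end LaurentRing

/-- the determinant of the Magnus matrix of any automorphism `φ` of the free
group `F_n` is a signed monomial `±γ` with `γ ∈ H₁ = ℤⁿ`.  Here `d i` is the Fox derivative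
`∂/∂γᵢ` pushed to `ℤ[H₁]` via abelianization (base case `d i (γⱼ) = δᵢⱼ`, product rule
`d i (uv) = d i (u) + ε(u)·d i (v)` with `ε` the abelianization-monomial map). -/
theorem magnus_det_of_aut_is_signed_monomial (n : ℕ)
    (ε : FreeGroup (Fin n) →* (LaurentRing n)ˣ)
    (hε : ∀ j : Fin n, (ε (FreeGroup.of j) : LaurentRing n) = monoR n (Finsupp.single j 1))
    (d : Fin n → FreeGroup (Fin n) → LaurentRing n)
    (hbase : ∀ i j : Fin n, d i (FreeGroup.of j) = if i = j then 1 else 0)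
    (hprod : ∀ (i : Fin n) (u v : FreeGroup (Fin n)),
      d i (u * v) = d i u + (ε u : LaurentRing n) * d i v)
    (φ : FreeGroup (Fin n) ≃* FreeGroup (Fin n)) :
    ∃ x : Fin n →₀ ℤ,
      (Matrix.of fun i j : Fin n => d i (φ (FreeGroup.of j))).det = monoR n x ∨
      (Matrix.of fun i j : Fin n => d i (φ (FreeGroup.of j))).det = -monoR n x := by
  let χ := (Units.coeHom (LaurentRing n)).comp ε
  have hd : ∀ i, IsTwistedDerivation χ (d i) := hprod
  obtain ⟨σ, hσ⟩ := LaurentRing.exists_ringHom_monoR_single fun j => ε (φ (FreeGroup.of j))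
  have hσχ : σ.toMonoidHom.comp χ = χ.comp φ.toMonoidHom :=
    FreeGroup.ext_hom _ _ fun j => by simp [χ, hε, hσ]
  have hinv : foxJacobian d φ.toMonoidHom * (foxJacobian d φ.symm.toMonoidHom).map σ = 1 := by
    rw [← foxJacobian_comp hbase hd hσχ, ← foxJacobian_id hbase]
    exact congrArg _ (MonoidHom.ext φ.apply_symm_apply)
  exact LaurentRing.eq_monoR_or_eq_neg_monoR_of_isUnit (Matrix.isUnit_det_of_right_inverse hinv)
end
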